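/- arXiv:2312.06939 — 2 statements merged into one kernel-verified Lean document; each statement's English description precedes it below -/
import Mathlib

section
/- If the Choi matrix ρ^Λ = (id⊗Λ)(|Ψ⟩⟨Ψ|) of a qubit channel Λ is a separable two-qubit state, then Λ is entanglement-breaking. -/
open Matrix BigOperators
open scoped Kronecker ComplexOrder

noncomputable section

abbrev M2 := Matrix (Fin 2) (Fin 2) ℂ
abbrev M4 := Matrix (Fin 2 × Fin 2) (Fin 2 × Fin 2) ℂ

/-- The Pauli matrices `σ₁, σ₂, σ₃`. -/
def pauli : Fin 3 → M2 :=
  ![!![0, 1; 1, 0], !![0, -Complex.I; Complex.I, 0], !![1, 0; 0, -1]]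

/-- The Choi matrix `ρ^Λ = (id ⊗ Λ)(|Ψ⟩⟨Ψ|)` of a linear map on `2 × 2` matrices,
where `|Ψ⟩ = (|00⟩ + |11⟩)/√2`, so that `|Ψ⟩⟨Ψ| = (1/2) ∑ i j, E i j ⊗ E i j`. -/
def Choi (Λ : M2 →ₗ[ℂ] M2) : M4 :=
  (1/2 : ℂ) • ∑ i : Fin 2, ∑ j : Fin 2,
    (single i j (1 : ℂ)) ⊗ₖ (Λ (single i j (1 : ℂ)))

/-- A linear map is trace preserving if it preserves the trace of every matrix. -/
def TracePreserving (Λ : M2 →ₗ[ℂ] M2) : Prop := ∀ ρ : M2, (Λ ρ).trace = ρ.trace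

/-- A qubit channel: a trace-preserving linear map on `2 × 2` complex matrices that is
completely positive (equivalently, its Choi matrix is positive semidefinite). -/
def IsQubitChannel (Λ : M2 →ₗ[ℂ] M2) : Prop :=
  TracePreserving Λ ∧ (Choi Λ).PosSemidef

/-- A density matrix: positive semidefinite with trace one. -/
def IsDensity {n : Type*} [Fintype n] [DecidableEq n] (ρ : Matrix n n ℂ) : Prop :=
  ρ.PosSemidef ∧ ρ.trace = 1

/-- A qubit channel is entanglement breaking if it is of measure-and-prepare form
`Λ(ρ) = ∑ k, Tr(M k * ρ) • σ k` for a POVM `M` and density matrices `σ k`. -/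
def IsEB (Λ : M2 →ₗ[ℂ] M2) : Prop :=
  ∃ (n : ℕ) (M : Fin n → M2) (σ : Fin n → M2),
    (∀ k, (M k).PosSemidef) ∧ (∑ k, M k = 1) ∧ (∀ k, IsDensity (σ k)) ∧
    (∀ ρ : M2, Λ ρ = ∑ k, ((M k * ρ).trace) • σ k)

/-- A two-qubit matrix is separable if it is a finite convex combination of tensor products
of `2 × 2` density matrices. -/
def IsSepState (ρ : M4) : Prop :=
  ∃ (n : ℕ) (p : Fin n → ℝ) (ρA ρB : Fin n → M2),
    (∀ i, 0 ≤ p i) ∧ (∑ i, p i = 1) ∧ (∀ i, IsDensity (ρA i)) ∧ (∀ i, IsDensity (ρB i)) ∧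
    ρ = ∑ i, ((p i : ℝ) : ℂ) • ((ρA i) ⊗ₖ (ρB i))

/-! The Choi map `Λ ↦ ρ^Λ` is injective, and the measure-and-prepare map with POVM `M k` and
output states `σ k` has Choi matrix `½ ∑ k, (M k)ᵀ ⊗ σ k`. So a separable decomposition
`ρ^Λ = ∑ k, p k • ρA k ⊗ ρB k` exhibits `Λ` as the measure-and-prepare map with
`M k = 2 p k (ρA k)ᵀ` (positive semidefinite) and `σ k = ρB k`, and trace preservation of `Λ`
forces `∑ k, M k = 1`. -/

def measurePrepare {ι : Type*} [Fintype ι] (M σ : ι → M2) : M2 →ₗ[ℂ] M2 where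
  toFun ρ := ∑ k, (M k * ρ).trace • σ k
  map_add' ρ ρ' := by simp only [Matrix.mul_add, trace_add, add_smul, Finset.sum_add_distrib]
  map_smul' c ρ := by simp only [Matrix.mul_smul, trace_smul, smul_eq_mul, mul_smul,
    Finset.smul_sum, RingHom.id_apply]

theorem measurePrepare_apply {ι : Type*} [Fintype ι] (M σ : ι → M2) (ρ : M2) :
    measurePrepare M σ ρ = ∑ k, (M k * ρ).trace • σ k := rfl

theorem choi_apply (Λ : M2 →ₗ[ℂ] M2) (i a j b : Fin 2) :
    Choi Λ (i, a) (j, b) = (1 / 2) * Λ (single i j 1) a b := by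
  simp only [Choi, Matrix.smul_apply, Matrix.sum_apply, kroneckerMap_apply, single_apply, ite_and,
    ite_mul, one_mul, zero_mul, smul_eq_mul, Finset.sum_ite_irrel, Finset.sum_const_zero,
    Fintype.sum_ite_eq']

theorem choi_injective : Function.Injective Choi := by
  intro Λ Λ' h
  refine Matrix.ext_linearMap ℂ fun i j => LinearMap.ext_ring ?_
  ext a b
  simpa [choi_apply] using congrFun (congrFun h (i, a)) (j, b)

theorem choi_measurePrepare {ι : Type*} [Fintype ι] (M σ : ι → M2) :
    Choi (measurePrepare M σ) = (1 / 2 : ℂ) • ∑ k, (M k)ᵀ ⊗ₖ σ k := by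
  ext ⟨i, a⟩ ⟨j, b⟩
  simp [choi_apply, measurePrepare_apply, Matrix.sum_apply, kroneckerMap_apply, trace_mul_single]

theorem eq_one_of_forall_trace_mul_eq {m R : Type*} [Fintype m] [DecidableEq m] [CommSemiring R]
    {A : Matrix m m R} (h : ∀ ρ, (A * ρ).trace = ρ.trace) : A = 1 :=
  ext_iff_trace_mul_right.2 fun ρ => by rw [h, Matrix.one_mul]

theorem sum_eq_one_of_tracePreserving_measurePrepare {ι : Type*} [Fintype ι] {M σ : ι → M2}
    (hσ : ∀ k, (σ k).trace = 1) (hΛ : TracePreserving (measurePrepare M σ)) : ∑ k, M k = 1 :=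
  eq_one_of_forall_trace_mul_eq fun ρ => by
    rw [← hΛ ρ, measurePrepare_apply, trace_sum, Finset.sum_mul, trace_sum]
    simp [hσ]

/-- if the Choi matrix of a qubit channel is separable, then the channel is
entanglement breaking. -/
theorem stmt8 (Λ : M2 →ₗ[ℂ] M2) (hΛ : IsQubitChannel Λ) (hsep : IsSepState (Choi Λ)) :
    IsEB Λ := by
  obtain ⟨n, p, ρA, ρB, hp, -, hA, hB, hChoi⟩ := hsep
  set M : Fin n → M2 := fun k => ((2 * p k : ℝ) : ℂ) • (ρA k)ᵀ
  have hΛM : Λ = measurePrepare M ρB := choi_injective <| by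
    rw [hChoi, choi_measurePrepare, Finset.smul_sum]
    refine Finset.sum_congr rfl fun k _ => ?_
    rw [transpose_smul, transpose_transpose, smul_kronecker, smul_smul]
    push_cast
    congr 1
    ring
  have hM : ∀ k, (M k).PosSemidef := fun k =>
    (hA k).1.transpose.smul (Complex.zero_le_real.2 (by linarith [hp k]))
  have hPOVM : ∑ k, M k = 1 :=
    sum_eq_one_of_tracePreserving_measurePrepare (fun k => (hB k).2) (hΛM ▸ hΛ.1)
  exact ⟨n, M, ρB, hM, hPOVM, hB, fun ρ => LinearMap.congr_fun hΛM ρ⟩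
end
end

section
/- If a two-qubit state ρ is separable, then its partial transpose ρ^{T_B} (transpose on the second tensor factor) is positive semidefinite. -/
/-! The partial transpose is linear and sends a product `A ⊗ B` to `A ⊗ Bᵀ`, which is positive
semidefinite because transposition preserves positivity; a separable state is a nonnegative
combination of such products. -/

open Matrix BigOperators
open scoped Kronecker ComplexOrder

noncomputable section

/-- The partial transpose on the second tensor factor:
`(ρ^{T_B})_{(i,k),(j,l)} = ρ_{(i,l),(j,k)}`. -/
def ptB (ρ : M4) : M4 :=
  Matrix.of fun p q : Fin 2 × Fin 2 => ρ (p.1, q.2) (q.1, p.2)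

theorem ptB_smul (c : ℂ) (M : M4) : ptB (c • M) = c • ptB M := by
  ext
  simp [ptB]

theorem ptB_sum {ι : Type*} (s : Finset ι) (f : ι → M4) :
    ptB (∑ i ∈ s, f i) = ∑ i ∈ s, ptB (f i) := by
  ext
  simp [ptB, Matrix.sum_apply]

theorem ptB_kronecker (A B : M2) : ptB (A ⊗ₖ B) = A ⊗ₖ Bᵀ := by
  ext ⟨i, k⟩ ⟨j, l⟩
  simp [ptB, kroneckerMap_apply]

theorem Matrix.PosSemidef.ptB_kronecker {A B : M2} (hA : A.PosSemidef) (hB : B.PosSemidef) :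
    (ptB (A ⊗ₖ B)).PosSemidef := by
  rw [_root_.ptB_kronecker]
  exact hA.kronecker hB.transpose

theorem stmt11_general (ρ : M4) (hsep : IsSepState ρ) :
    (ptB ρ).PosSemidef := by
  obtain ⟨n, p, ρA, ρB, hp, -, hA, hB, rfl⟩ := hsep
  rw [ptB_sum]
  refine posSemidef_sum _ fun i _ => ?_
  rw [ptB_smul]
  exact ((hA i).1.ptB_kronecker (hB i).1).smul (Complex.zero_le_real.mpr (hp i))

/-- the partial transpose of a separable two-qubit state is positive
semidefinite. -/
theorem stmt11 (ρ : M4) (hρ : IsDensity ρ) (hsep : IsSepState ρ) :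
    (ptB ρ).PosSemidef :=
  stmt11_general ρ hsep
end
end
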